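/- Let K be an algebraically closed field and k ≥ 3 an integer. For every positive integer n there exist k-tensors S, T ∈ K^{n,…,n} such that Q(S)^{k−1} ≤ kn − (k−1) and Q(T)^{k−1} ≤ kn − (k−1), while Q(S ⊕ T) ≥ n. (Subrank of k-tensors is not additive under the direct sum.) -/

import Mathlib

/-- The space of order-`k` tensors of format `n` over `K`. -/
abbrev TensorK (K : Type*) {k : ℕ} (n : Fin k → ℕ) : Type _ := (∀ j, Fin (n j)) → K

/-- `S` is a restriction of `T` (for order-`k` tensors). -/
def RestrictK {K : Type*} [CommRing K] {k : ℕ} {m n : Fin k → ℕ}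
    (S : TensorK K m) (T : TensorK K n) : Prop :=
  ∃ A : ∀ j, Matrix (Fin (m j)) (Fin (n j)) K,
    ∀ i, S i = ∑ a : ∀ j, Fin (n j), (∏ j, A j (i j) (a j)) * T a

/-- The order-`k` unit tensor `I_r`: ones on the main diagonal, zeroes elsewhere. -/
def unitTensorK (K : Type*) [CommRing K] (k r : ℕ) : TensorK K (fun _ : Fin k => r) :=
  fun i => if ∀ j j', i j = i j' then 1 else 0

/-- The subrank `Q(T)` of an order-`k` tensor: the largest `r` with `I_r ≤ T`. -/
noncomputable def subrankK {K : Type*} [CommRing K] {k : ℕ} {n : Fin k → ℕ}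
    (T : TensorK K n) : ℕ :=
  sSup {r : ℕ | RestrictK (unitTensorK K k r) T}

/-- A subset of `ι → K` is Zariski-closed if it is the common zero set of a family of
polynomials in the coordinates. -/
def IsZariskiClosed {K : Type*} [CommRing K] {ι : Type*} [Fintype ι]
    (Z : Set (ι → K)) : Prop :=
  ∃ P : Set (MvPolynomial ι K), Z = {x | ∀ p ∈ P, MvPolynomial.eval x p = 0}

/-- A subset is Zariski-open if its complement is Zariski-closed. -/
def IsZariskiOpen {K : Type*} [CommRing K] {ι : Type*} [Fintype ι]
    (U : Set (ι → K)) : Prop :=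
  IsZariskiClosed Uᶜ

/-- The direct sum `S ⊕ T` of two order-`k` tensors in `K^{n,…,n}`, as a tensor in
`K^{2n,…,2n}`. -/
def dsumK {K : Type*} [CommRing K] {k n : ℕ}
    (S T : TensorK K (fun _ : Fin k => n)) : TensorK K (fun _ : Fin k => 2 * n) :=
  fun i =>
    if h : ∀ j, (i j : ℕ) < n then S (fun j => ⟨i j, h j⟩)
    else if h' : ∀ j, n ≤ (i j : ℕ) then
      T (fun j => ⟨(i j : ℕ) - n, by
        have h1 : (i j : ℕ) < 2 * n := (i j).isLt
        have h2 := h' j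
        show (i j : ℕ) - n < n
        omega⟩)
    else 0

/-!
Let `r` be least with `r ^ (k - 1) > k n - (k - 1)`. The tensors `T ∈ K^{n,…,n}` with
`I_r ≤ T` lie in the zero set of one nonzero polynomial `p`. Indeed, a restriction
`I_r = (A₁ ⊗ ⋯ ⊗ A_k) T` can be rescaled by the torus fixing `I_r` so that all but one of the
`A j` have a prescribed entry `1` in every row, and each `A j` has an invertible `r × r` minor `Qⱼ` on some
columns `sⱼ`. On the block `s₁ × ⋯ × s_k`, `T` is then a polynomial in the remaining entries of the
`A j`, the entries of `T` off the block, and `(∏ j, det Qⱼ)⁻¹`. For fixed positions these are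
`k r n - (k - 1) r + (n ^ k - r ^ k) + 1 < n ^ k` parameters, so the `n ^ k` coordinates of `T` are
algebraically dependent; multiply the resulting polynomials over all positions.

Over the infinite field `K` choose `S` with `p S ≠ 0` and `p (I_n - S) ≠ 0`. Then `S` and
`I_n - S` both have subrank `< r`, while their sum `I_n` is a restriction of `S ⊕ (I_n - S)`.
-/

open Matrix
open Function.Embedding (piCongrRight)

section TensorAction

variable {R : Type*} [CommRing R] {k : ℕ}

def tensorAct {m n : Fin k → ℕ} (A : ∀ j, Matrix (Fin (m j)) (Fin (n j)) R)
    (T : TensorK R n) : TensorK R m :=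
  fun i => ∑ a, (∏ j, A j (i j) (a j)) * T a

theorem restrictK_iff {m n : Fin k → ℕ} {S : TensorK R m} {T : TensorK R n} :
    RestrictK S T ↔ ∃ A, S = tensorAct A T := by
  simp only [RestrictK, funext_iff, tensorAct]

theorem tensorAct_tensorAct {m n q : Fin k → ℕ} (A : ∀ j, Matrix (Fin (m j)) (Fin (n j)) R)
    (B : ∀ j, Matrix (Fin (n j)) (Fin (q j)) R) (T : TensorK R q) :
    tensorAct A (tensorAct B T) = tensorAct (fun j => A j * B j) T := by
  ext i
  simp only [tensorAct, mul_apply, Finset.mul_sum, ← mul_assoc, ← Finset.prod_mul_distrib]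
  rw [Finset.sum_comm]
  simp only [← Finset.sum_mul, Finset.prod_univ_sum, Fintype.piFinset_univ]

theorem tensorAct_diagonal {n : Fin k → ℕ} (d : ∀ j, Fin (n j) → R) (T : TensorK R n) :
    tensorAct (fun j => diagonal (d j)) T = fun i => (∏ j, d j (i j)) * T i := by
  ext i
  rw [tensorAct, Fintype.sum_eq_single i]
  · simp
  · intro a ha
    obtain ⟨j, hj⟩ := Function.ne_iff.mp ha
    rw [Finset.prod_eq_zero (Finset.mem_univ j) (diagonal_apply_ne (d j) hj.symm), zero_mul]

theorem tensorAct_one {n : Fin k → ℕ} (T : TensorK R n) :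
    tensorAct (fun j => (1 : Matrix (Fin (n j)) (Fin (n j)) R)) T = T := by
  simpa using tensorAct_diagonal (fun _ _ => (1 : R)) T

theorem RingHom.map_tensorAct {S : Type*} [CommRing S] (f : R →+* S) {m n : Fin k → ℕ}
    (A : ∀ j, Matrix (Fin (m j)) (Fin (n j)) R) (T : TensorK R n) (i : ∀ j, Fin (m j)) :
    f (tensorAct A T i) = tensorAct (fun j => (A j).map f) (f ∘ T) i := by
  simp [tensorAct, map_sum, map_prod]

theorem RestrictK.trans {m n q : Fin k → ℕ} {S : TensorK R m} {T : TensorK R n}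
    {U : TensorK R q} (hST : RestrictK S T) (hTU : RestrictK T U) : RestrictK S U := by
  obtain ⟨A, rfl⟩ := restrictK_iff.mp hST
  obtain ⟨B, rfl⟩ := restrictK_iff.mp hTU
  exact restrictK_iff.mpr ⟨_, tensorAct_tensorAct A B U⟩

theorem tensorAct_eq_submatrix_add_indicator {r m n : Fin k → ℕ}
    (A : ∀ j, Matrix (Fin (m j)) (Fin (n j)) R) (s : ∀ j, Fin (r j) ↪ Fin (n j))
    (T : TensorK R n) :
    tensorAct A T = tensorAct (fun j => (A j).submatrix id (s j))
        (T ∘ piCongrRight s) +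
      tensorAct A ((Set.range (piCongrRight s))ᶜ.indicator T) := by
  ext i
  have hblock : ∑ a, (∏ j, A j (i j) (a j)) *
      (Set.range (piCongrRight s)).indicator T a =
      ∑ c, (∏ j, A j (i j) (s j (c j))) * T (piCongrRight s c) := by
    refine (Fintype.sum_of_injective _ (piCongrRight s).injective _ _
      (fun a ha => by simp [Set.indicator_of_notMem ha]) (fun c => ?_)).symm
    simp
  simp only [Pi.add_apply, tensorAct, submatrix_apply, id, Function.comp_apply]
  rw [← hblock, ← Finset.sum_add_distrib]
  simp only [← mul_add, Set.indicator_self_add_compl_apply]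

theorem det_smul_comp_eq_tensorAct_adjugate {r n : Fin k → ℕ}
    (A : ∀ j, Matrix (Fin (r j)) (Fin (n j)) R) (s : ∀ j, Fin (r j) ↪ Fin (n j))
    (T : TensorK R n) :
    (∏ j, ((A j).submatrix id (s j)).det) • (T ∘ piCongrRight s) =
      tensorAct (fun j => ((A j).submatrix id (s j)).adjugate)
        (tensorAct A T - tensorAct A ((Set.range (piCongrRight s))ᶜ.indicator T)) := by
  rw [tensorAct_eq_submatrix_add_indicator A s T, add_sub_cancel_right, tensorAct_tensorAct]
  simp only [adjugate_mul, smul_one_eq_diagonal, tensorAct_diagonal]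
  ext i
  simp

end TensorAction

section UnitTensor

variable {R : Type*} [CommRing R] {k : ℕ}

theorem tensorAct_submatrix_one {m n : Fin k → ℕ} (f : ∀ j, Fin (m j) → Fin (n j))
    (T : TensorK R n) :
    tensorAct (fun j => (1 : Matrix (Fin (n j)) (Fin (n j)) R).submatrix (f j) id) T =
      fun i => T (fun j => f j (i j)) := by
  ext i
  exact congrFun (tensorAct_one T) _

theorem restrictK_unitTensorK_of_le {a b : ℕ} (hab : a ≤ b) :
    RestrictK (unitTensorK R k a) (unitTensorK R k b) := by
  refine restrictK_iff.mpr
    ⟨_, Eq.trans ?_ (tensorAct_submatrix_one (fun _ => Fin.castLE hab) _).symm⟩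
  ext i
  simp only [unitTensorK, Fin.castLE_inj]

theorem unitTensorK_update_const (hk : 2 ≤ k) (j₀ : Fin k) {r : ℕ} (i i' : Fin r) :
    unitTensorK R k r (Function.update (fun _ => i') j₀ i) =
      (1 : Matrix (Fin r) (Fin r) R) i i' := by
  obtain ⟨j₁, hj₁⟩ : ∃ j₁ : Fin k, j₁ ≠ j₀ :=
    Fintype.exists_ne_of_one_lt_card (by simp only [Fintype.card_fin]; omega) j₀
  simp only [unitTensorK, one_apply]
  congr 1
  refine propext ⟨fun h => ?_, fun h j j' => ?_⟩
  · simpa [Function.update_of_ne hj₁] using h j₀ j₁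
  · subst h
    by_cases hj : j = j₀ <;> by_cases hj' : j' = j₀ <;> simp [hj, hj']

theorem tensorAct_diagonal_unitTensorK {r : ℕ} (d : Fin k → Fin r → R)
    (hd : ∀ i, ∏ j, d j i = 1) :
    tensorAct (fun j => diagonal (d j)) (unitTensorK R k r) = unitTensorK R k r := by
  rw [tensorAct_diagonal]
  ext i
  by_cases hi : ∀ j j', i j = i j'
  · rcases isEmpty_or_nonempty (Fin k) with hk | ⟨⟨j₁⟩⟩
    · simp
    · rw [Finset.prod_congr rfl fun j _ => by rw [hi j j₁], hd, one_mul]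
  · simp [unitTensorK, hi]

theorem RingHom.comp_unitTensorK {S : Type*} [CommRing S] (f : R →+* S) (r : ℕ) :
    f ∘ unitTensorK R k r = unitTensorK S k r := by
  ext i
  simp [unitTensorK, apply_ite f]

end UnitTensor

theorem Matrix.exists_det_submatrix_ne_zero_of_mul_eq_one {m n R : Type*} [Fintype m]
    [DecidableEq m] [Fintype n] [CommRing R] [Nontrivial R] {A : Matrix m n R}
    {C : Matrix n m R} (h : A * C = 1) : ∃ s : m ↪ n, (A.submatrix id s).det ≠ 0 := by
  have hexpand : (A * C).det = ∑ f : m → n, (∏ i, C (f i) i) * (A.submatrix id f).det := by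
    simp only [det_apply', mul_apply, Finset.prod_univ_sum, Finset.mul_sum,
      Fintype.piFinset_univ, submatrix_apply, id, Finset.prod_mul_distrib]
    rw [Finset.sum_comm]
    refine Finset.sum_congr rfl fun f _ => Finset.sum_congr rfl fun σ _ => ?_
    ring
  obtain ⟨f, -, hf⟩ := Finset.exists_ne_zero_of_sum_ne_zero
    (hexpand ▸ h ▸ det_one.trans_ne one_ne_zero)
  have hdet := right_ne_zero_of_mul hf
  exact ⟨⟨f, fun i i' hii' => by_contra fun hne =>
    hdet (det_zero_of_column_eq hne (by simp [hii']))⟩, hdet⟩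

section Subrank

variable {R : Type*} [CommRing R] {k : ℕ}

theorem exists_mul_eq_one_of_unitTensorK_eq_tensorAct (hk : 2 ≤ k) {r : ℕ} {n : Fin k → ℕ}
    {A : ∀ j, Matrix (Fin r) (Fin (n j)) R} {T : TensorK R n}
    (hA : unitTensorK R k r = tensorAct A T) (j₀ : Fin k) :
    ∃ C : Matrix (Fin (n j₀)) (Fin r) R, A j₀ * C = 1 := by
  refine ⟨Matrix.of fun c i' => ∑ b : ∀ j, Fin (n j),
    if b j₀ = c then (∏ j ∈ Finset.univ.erase j₀, A j i' (b j)) * T b else 0, ?_⟩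
  ext i i'
  rw [← unitTensorK_update_const hk j₀ i i', hA, tensorAct, mul_apply]
  simp only [of_apply, Finset.mul_sum, mul_ite, mul_zero]
  rw [Finset.sum_comm]
  refine Finset.sum_congr rfl fun b _ => ?_
  rw [Finset.sum_ite_eq, if_pos (Finset.mem_univ _),
    ← Finset.mul_prod_erase _ _ (Finset.mem_univ j₀), Function.update_self, mul_assoc]
  congr 2
  exact Finset.prod_congr rfl fun j hj => by rw [Function.update_of_ne (Finset.ne_of_mem_erase hj)]

theorem le_of_restrictK_unitTensorK [Nontrivial R] (hk : 2 ≤ k) {r : ℕ} {n : Fin k → ℕ}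
    {T : TensorK R n} (h : RestrictK (unitTensorK R k r) T) (j : Fin k) : r ≤ n j := by
  obtain ⟨A, hA⟩ := restrictK_iff.mp h
  obtain ⟨C, hC⟩ := exists_mul_eq_one_of_unitTensorK_eq_tensorAct hk hA j
  obtain ⟨s, -⟩ := exists_det_submatrix_ne_zero_of_mul_eq_one hC
  simpa using Fintype.card_le_of_embedding s

theorem le_subrankK [Nontrivial R] (hk : 2 ≤ k) {r : ℕ} {n : Fin k → ℕ} {T : TensorK R n}
    (h : RestrictK (unitTensorK R k r) T) : r ≤ subrankK T :=
  le_csSup ⟨n ⟨0, by omega⟩, fun _ hm => le_of_restrictK_unitTensorK hk hm _⟩ h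

theorem subrankK_lt {r : ℕ} {n : Fin k → ℕ} {T : TensorK R n} (hr : 0 < r)
    (h : ¬ RestrictK (unitTensorK R k r) T) : subrankK T < r := by
  have : subrankK T ≤ r - 1 := csSup_le' fun m hm => by
    by_contra! hlt
    exact h ((restrictK_unitTensorK_of_le (by omega)).trans hm)
  omega

end Subrank

theorem restrictK_add_dsumK {R : Type*} [CommRing R] {k n : ℕ} (hk : 0 < k)
    (S T : TensorK R (fun _ : Fin k => n)) : RestrictK (S + T) (dsumK S T) := by
  let lo : Fin n → Fin (2 * n) := fun i => ⟨i, by omega⟩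
  let hi : Fin n → Fin (2 * n) := fun i => ⟨n + i, by omega⟩
  refine restrictK_iff.mpr
    ⟨fun _ => Matrix.of fun i a => if a = lo i ∨ a = hi i then 1 else 0, ?_⟩
  ext i
  have hne : (fun j => lo (i j)) ≠ fun j => hi (i j) := fun h => by
    have := congrArg Fin.val (congrFun h ⟨0, hk⟩)
    simp only [lo, hi] at this
    have := (i ⟨0, hk⟩).isLt
    omega
  rw [tensorAct, Fintype.sum_eq_add _ _ hne fun a ha => ?_]
  · simp only [dsumK, lo, hi, Matrix.of_apply, true_or, or_true, if_true, Finset.prod_const_one,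
      one_mul]
    rw [dif_pos fun j => (i j).isLt, dif_neg fun h => by have := h ⟨0, hk⟩; omega,
      dif_pos fun j => by omega]
    simp only [Pi.add_apply, Nat.add_sub_cancel_left]
  · by_cases hsel : ∀ j, a j = lo (i j) ∨ a j = hi (i j)
    · -- `a` mixes the two blocks, where `dsumK S T` vanishes
      obtain ⟨j₁, hj₁⟩ := Function.ne_iff.mp ha.1
      obtain ⟨j₂, hj₂⟩ := Function.ne_iff.mp ha.2
      have v₁ : (a j₁ : ℕ) = n + i j₁ := congrArg Fin.val ((hsel j₁).resolve_left hj₁)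
      have v₂ : (a j₂ : ℕ) = i j₂ := congrArg Fin.val ((hsel j₂).resolve_right hj₂)
      have : (i j₂ : ℕ) < n := (i j₂).isLt
      rw [dsumK, dif_neg fun h => by have := h j₁; omega,
        dif_neg fun h => by have := h j₂; omega, mul_zero]
    · obtain ⟨j, hj⟩ := not_forall.mp hsel
      rw [Finset.prod_eq_zero (Finset.mem_univ j) (by simp [hj]), zero_mul]

theorem exists_normalized_witness {K : Type*} [Field K] {k r n : ℕ} (hk : 2 ≤ k)
    {T : TensorK K (fun _ : Fin k => n)} (h : RestrictK (unitTensorK K k r) T) (j₀ : Fin k) :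
    ∃ (A : Fin k → Matrix (Fin r) (Fin n) K) (s : Fin k → Fin r ↪ Fin n)
      (t : Fin k → Fin r → Fin n),
      unitTensorK K k r = tensorAct A T ∧ (∀ j, ((A j).submatrix id (s j)).det ≠ 0) ∧
        ∀ j ≠ j₀, ∀ i, A j i (t j i) = 1 := by
  obtain ⟨A, hA⟩ := restrictK_iff.mp h
  choose C hC using exists_mul_eq_one_of_unitTensorK_eq_tensorAct hk hA
  choose s hs using fun j => exists_det_submatrix_ne_zero_of_mul_eq_one (hC j)
  have hrow : ∀ j i, ∃ c, A j i c ≠ 0 := fun j i => by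
    by_contra! h0
    exact hs j (det_eq_zero_of_row_eq_zero i fun c => h0 (s j c))
  choose t ht using hrow
  -- rescaling the rows of the `A j` by factors whose product over `j` is `1` fixes `I_r`
  set d : Fin k → Fin r → K := fun j i =>
    if j = j₀ then ∏ j' ∈ Finset.univ.erase j₀, A j' i (t j' i) else (A j i (t j i))⁻¹
  have hd0 : ∀ j i, d j i ≠ 0 := fun j i => by
    by_cases hj : j = j₀
    · simpa [d, hj] using Finset.prod_ne_zero_iff.mpr fun j' _ => ht j' i
    · simpa [d, hj] using ht j i
  have hd1 : ∀ i, ∏ j, d j i = 1 := fun i => by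
    rw [← Finset.mul_prod_erase _ _ (Finset.mem_univ j₀)]
    simp only [d, if_pos rfl]
    rw [Finset.prod_congr rfl fun j hj => if_neg (Finset.ne_of_mem_erase hj),
      ← Finset.prod_mul_distrib]
    exact Finset.prod_eq_one fun j _ => mul_inv_cancel₀ (ht j i)
  refine ⟨fun j => diagonal (d j) * A j, s, t, ?_, fun j => ?_, fun j hj i => ?_⟩
  · rw [← tensorAct_tensorAct, ← hA, tensorAct_diagonal_unitTensorK d hd1]
  · have : (diagonal (d j) * A j).submatrix id (s j) =
        diagonal (d j) * (A j).submatrix id (s j) := by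
      ext; simp [diagonal_mul]
    rw [this, det_mul, det_diagonal]
    exact mul_ne_zero (Finset.prod_ne_zero_iff.mpr fun i _ => hd0 j i) (hs j)
  · simp [d, diagonal_mul, hj, ht j i]

namespace MvPolynomial

theorem eval_aeval {R σ τ : Type*} [CommRing R] (x : τ → R)
    (v : σ → MvPolynomial τ R) (p : MvPolynomial σ R) :
    eval x (aeval v p) = eval (fun a => eval x (v a)) p :=
  aeval_bind₁ x v p

theorem exists_eval_ne_zero {K σ : Type*} [Field K] [Infinite K]
    {p : MvPolynomial σ K} (hp : p ≠ 0) : ∃ x, eval x p ≠ 0 := by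
  by_contra! h
  exact hp (funext fun x => by simpa using h x)

theorem exists_eval_ne_zero_and_eval_sub_ne_zero {K σ : Type*} [Field K]
    [Infinite K] {p : MvPolynomial σ K} (hp : p ≠ 0) (c : σ → K) :
    ∃ x, eval x p ≠ 0 ∧ eval (c - x) p ≠ 0 := by
  set q := aeval (fun i => C (c i) - X i) p
  have hq : ∀ y, eval y q = eval (c - y) p := fun y => by
    simp only [q, eval_aeval, map_sub, eval_C, eval_X]
    rfl
  obtain ⟨x, hx⟩ := exists_eval_ne_zero hp
  have hq0 : q ≠ 0 := fun h => hx (by simpa [hq] using congrArg (eval (c - x)) h)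
  obtain ⟨y, hy⟩ := exists_eval_ne_zero (mul_ne_zero hp hq0)
  rw [map_mul] at hy
  exact ⟨y, left_ne_zero_of_mul hy, hq y ▸ right_ne_zero_of_mul hy⟩

theorem exists_ne_zero_aeval_eq_zero_of_card_lt {K : Type*} [Field K]
    {ι κ : Type*} [Fintype ι] [Fintype κ] (h : Fintype.card ι < Fintype.card κ)
    (v : κ → MvPolynomial ι K) : ∃ p : MvPolynomial κ K, p ≠ 0 ∧ aeval v p = 0 := by
  by_contra! hv
  have hindep : AlgebraicIndependent K v :=
    (algebraicIndependent_iff (R := K)).mpr fun p hp => by_contra fun hp0 => hv p hp0 hp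
  have := hindep.lift_cardinalMk_le_trdeg
  simp only [MvPolynomial.trdeg_of_isDomain, Cardinal.mk_fintype, Cardinal.lift_natCast] at this
  exact absurd this (by exact_mod_cast h.not_ge)

theorem exists_ne_zero_eval_eq_zero_of_card_lt {K : Type*} [Field K]
    {ι κ : Type*} [Fintype ι] [Fintype κ] (h : Fintype.card ι < Fintype.card κ)
    (v : κ → MvPolynomial ι K) :
    ∃ p : MvPolynomial κ K, p ≠ 0 ∧
      ∀ x : ι → K, eval (fun a => eval x (v a)) p = 0 := by
  obtain ⟨p, hp0, hp⟩ := exists_ne_zero_aeval_eq_zero_of_card_lt h v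
  refine ⟨p, hp0, fun x => ?_⟩
  rw [← eval_aeval, hp, map_zero]

end MvPolynomial

section Stratum

open MvPolynomial

variable (K : Type*) [Field K] {k r n : ℕ} (j₀ : Fin k) (s : Fin k → Fin r ↪ Fin n)
  (t : Fin k → Fin r → Fin n)

def normalizedEntry : {j // j ≠ j₀} × Fin r ↪ Fin k × Fin r × Fin n where
  toFun p := (p.1, p.2, t p.1 p.2)
  inj' p q h := by
    simp only [Prod.mk.injEq] at h
    exact Prod.ext (Subtype.ext h.1) h.2.1

/-- Coordinates of a stratum: the entries of the `A j` other than the normalized ones, the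
entries of `T` off the block `s₁ × ⋯ × s_k`, and one for `(∏ j, det Qⱼ)⁻¹`. -/
abbrev StratumVar : Type :=
  ↥(Finset.univ.map (normalizedEntry j₀ t))ᶜ ⊕
    ↥(Finset.univ.map (piCongrRight s))ᶜ ⊕ Unit

noncomputable def stratumMatrix (j : Fin k) :
    Matrix (Fin r) (Fin n) (MvPolynomial (StratumVar j₀ s t) K) :=
  Matrix.of fun i c =>
    if h : (j, i, c) ∈ Finset.univ.map (normalizedEntry j₀ t) then 1
    else X (Sum.inl ⟨(j, i, c), Finset.mem_compl.mpr h⟩)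

noncomputable def stratumOffBlock :
    TensorK (MvPolynomial (StratumVar j₀ s t) K) (fun _ : Fin k => n) :=
  fun a => if h : a ∈ Finset.univ.map (piCongrRight s) then 0
    else X (Sum.inr (Sum.inl ⟨a, Finset.mem_compl.mpr h⟩))

/-- On the block, `T` is recovered by Cramer's rule (`det_smul_comp_eq_tensorAct_adjugate`). -/
noncomputable def stratumTensor :
    TensorK (MvPolynomial (StratumVar j₀ s t) K) (fun _ : Fin k => n) :=
  Function.extend (piCongrRight s)
    ((X (Sum.inr (Sum.inr ())) : MvPolynomial (StratumVar j₀ s t) K) •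
      tensorAct (fun j => ((stratumMatrix K j₀ s t j).submatrix id (s j)).adjugate)
        (unitTensorK (MvPolynomial (StratumVar j₀ s t) K) k r -
          tensorAct (stratumMatrix K j₀ s t) (stratumOffBlock K j₀ s t)))
    (stratumOffBlock K j₀ s t)

theorem card_stratumVar :
    Fintype.card (StratumVar j₀ s t) + (k - 1) * r + r ^ k = k * r * n + n ^ k + 1 := by
  have hA := Fintype.card_le_of_embedding (normalizedEntry j₀ t)
  have hT := Fintype.card_le_of_embedding (piCongrRight s)
  have hne : Fintype.card {j // j ≠ j₀} = k - 1 := by simp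
  simp only [Fintype.card_sum, Fintype.card_coe, Finset.card_compl, Finset.card_map,
    Finset.card_univ, Fintype.card_unit, Fintype.card_prod, Fintype.card_fin, Fintype.card_pi,
    Finset.prod_const, hne] at hA hT ⊢
  rw [mul_assoc]
  omega

variable {K}

theorem exists_eval_stratumTensor_eq {A : Fin k → Matrix (Fin r) (Fin n) K}
    {T : TensorK K (fun _ : Fin k => n)} (hA : unitTensorK K k r = tensorAct A T)
    (hdet : ∀ j, ((A j).submatrix id (s j)).det ≠ 0)
    (hnorm : ∀ j ≠ j₀, ∀ i, A j i (t j i) = 1) :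
    ∃ x, (fun a => eval x (stratumTensor K j₀ s t a)) = T := by
  set x : StratumVar j₀ s t → K := Sum.elim (fun v => A v.1.1 v.1.2.1 v.1.2.2)
    (Sum.elim (fun a => T a) fun _ => (∏ j, ((A j).submatrix id (s j)).det)⁻¹)
  have hmat : ∀ j, (stratumMatrix K j₀ s t j).map (eval x) = A j := by
    intro j
    ext i c
    simp only [stratumMatrix, map_apply, of_apply]
    split_ifs with h
    · obtain ⟨⟨⟨j', hj'⟩, i'⟩, -, he⟩ := Finset.mem_map.mp h
      simp only [normalizedEntry] at he
      obtain ⟨rfl, rfl, rfl⟩ := he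
      simp [hnorm j' hj' i']
    · simp [x]
  have hoff : eval x ∘ stratumOffBlock K j₀ s t =
      (Set.range (piCongrRight s))ᶜ.indicator T := by
    ext a
    simp only [Function.comp_apply, stratumOffBlock, Finset.mem_map, Finset.mem_univ, true_and]
    split_ifs with h
    · simp [h]
    · simp [x, h]
  refine ⟨x, funext fun a => ?_⟩
  by_cases ha : ∃ c, piCongrRight s c = a
  · obtain ⟨c, rfl⟩ := ha
    rw [stratumTensor, (piCongrRight s).injective.extend_apply]
    simp only [Pi.smul_apply, smul_eq_mul, map_mul, eval_X, RingHom.map_tensorAct]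
    have hadj : (fun j => ((stratumMatrix K j₀ s t j).submatrix id (s j)).adjugate.map (eval x)) =
        fun j => ((A j).submatrix id (s j)).adjugate := by
      funext j
      rw [← RingHom.mapMatrix_apply, RingHom.map_adjugate, RingHom.mapMatrix_apply,
        ← submatrix_map, hmat]
    have hinner : eval x ∘ (unitTensorK _ k r -
        tensorAct (stratumMatrix K j₀ s t) (stratumOffBlock K j₀ s t)) =
        tensorAct A T - tensorAct A ((Set.range (piCongrRight s))ᶜ.indicator T) := by
      ext b
      rw [← hA, ← RingHom.comp_unitTensorK (eval x), ← hoff]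
      simp only [Function.comp_apply, Pi.sub_apply, map_sub, RingHom.map_tensorAct, hmat]
    rw [hadj, hinner, ← det_smul_comp_eq_tensorAct_adjugate, Pi.smul_apply, smul_eq_mul,
      ← mul_assoc]
    simp only [x, Sum.elim_inr]
    rw [inv_mul_cancel₀ (Finset.prod_ne_zero_iff.mpr fun j _ => hdet j), one_mul,
      Function.comp_apply]
  · rw [stratumTensor, Function.extend_apply' _ _ _ ha, ← Function.comp_apply (f := eval x),
      hoff, Set.indicator_of_mem (by simpa using ha)]

end Stratum

section Vanishing

open MvPolynomial

variable {K : Type*} [Field K] {k r n : ℕ}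

theorem exists_ne_zero_eval_stratumTensor (j₀ : Fin k) (s : Fin k → Fin r ↪ Fin n)
    (t : Fin k → Fin r → Fin n) (hcount : k * r * n + 1 < (k - 1) * r + r ^ k) :
    ∃ p : MvPolynomial (Fin k → Fin n) K, p ≠ 0 ∧
      ∀ x, eval (fun a => eval x (stratumTensor K j₀ s t a)) p = 0 := by
  refine exists_ne_zero_eval_eq_zero_of_card_lt ?_ _
  have hcard := card_stratumVar j₀ s t
  have hrn : r ^ k ≤ n ^ k :=
    Nat.pow_le_pow_left (by simpa using Fintype.card_le_of_embedding (s j₀)) k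
  simp only [Fintype.card_pi, Fintype.card_fin, Finset.prod_const, Finset.card_univ]
  omega

theorem exists_ne_zero_eval_eq_zero_of_restrictK (hk : 2 ≤ k)
    (hcount : k * r * n + 1 < (k - 1) * r + r ^ k) :
    ∃ p : MvPolynomial (Fin k → Fin n) K, p ≠ 0 ∧
      ∀ T : TensorK K (fun _ : Fin k => n), RestrictK (unitTensorK K k r) T → eval T p = 0 := by
  let j₀ : Fin k := ⟨0, by omega⟩
  choose p hp0 hp using fun st : (Fin k → Fin r ↪ Fin n) × (Fin k → Fin r → Fin n) =>
    exists_ne_zero_eval_stratumTensor (K := K) j₀ st.1 st.2 hcount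
  refine ⟨∏ st, p st, Finset.prod_ne_zero_iff.mpr fun st _ => hp0 st, fun T hT => ?_⟩
  obtain ⟨A, s, t, hA, hdet, hnorm⟩ := exists_normalized_witness hk hT j₀
  obtain ⟨x, hx⟩ := exists_eval_stratumTensor_eq j₀ s t hA hdet hnorm
  rw [map_prod, ← hx]
  exact Finset.prod_eq_zero (Finset.mem_univ (s, t)) (hp (s, t) x)

end Vanishing

theorem mul_add_one_lt_of_lt_pow {k n r : ℕ} (hk : 2 ≤ k) (hr : k * n - (k - 1) < r ^ (k - 1)) :
    k * r * n + 1 < (k - 1) * r + r ^ k := by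
  obtain ⟨m, rfl⟩ : ∃ m, k = m + 2 := ⟨k - 2, by omega⟩
  rw [show m + 2 - 1 = m + 1 by omega] at hr ⊢
  rw [pow_succ]
  have hq : (m + 2) * n ≤ r ^ (m + 1) + m := by omega
  obtain rfl | rfl | hr2 : r = 0 ∨ r = 1 ∨ 2 ≤ r := by omega
  · simp at hr
  · have hn : n = 0 := by simp only [one_pow] at hq; nlinarith
    simp [hn]
  · nlinarith [Nat.mul_le_mul_right r hq]

theorem subrank_not_additive_k_general (K : Type*) [Field K] [IsAlgClosed K]
    (k : ℕ) (hk : 3 ≤ k) (n : ℕ) :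
    ∃ S T : TensorK K (fun _ : Fin k => n),
      (subrankK S) ^ (k - 1) ≤ k * n - (k - 1) ∧
      (subrankK T) ^ (k - 1) ≤ k * n - (k - 1) ∧
      n ≤ subrankK (dsumK S T) := by
  have hex : ∃ r, k * n - (k - 1) < r ^ (k - 1) :=
    ⟨k * n - (k - 1) + 1, (Nat.lt_succ_self _).trans_le (Nat.le_self_pow (by omega) _)⟩
  have hr : 0 < Nat.find hex := Nat.pos_of_ne_zero fun h => by
    simpa [h, zero_pow (show k - 1 ≠ 0 by omega)] using Nat.find_spec hex
  obtain ⟨p, hp0, hp⟩ := exists_ne_zero_eval_eq_zero_of_restrictK (K := K) (n := n) (by omega)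
    (mul_add_one_lt_of_lt_pow (by omega) (Nat.find_spec hex))
  have hbound (X : TensorK K (fun _ : Fin k => n)) (hX : MvPolynomial.eval X p ≠ 0) :
      subrankK X ^ (k - 1) ≤ k * n - (k - 1) :=
    not_lt.mp (Nat.find_min hex (subrankK_lt hr fun h => hX (hp X h)))
  obtain ⟨S, hS, hT⟩ :=
    MvPolynomial.exists_eval_ne_zero_and_eval_sub_ne_zero hp0 (unitTensorK K k n)
  refine ⟨S, unitTensorK K k n - S, hbound S hS, hbound _ hT, le_subrankK (by omega) ?_⟩
  simpa using restrictK_add_dsumK (by omega) S (unitTensorK K k n - S)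

/-- Subrank of `k`-tensors is not additive under the direct sum: there are
`S, T` in `K^{n,…,n}` with `Q(S)^{k−1}, Q(T)^{k−1} ≤ kn − (k−1)` while
`Q(S ⊕ T) ≥ n`. -/
theorem subrank_not_additive_k (K : Type*) [Field K] [IsAlgClosed K]
    (k : ℕ) (hk : 3 ≤ k) (n : ℕ) (hn : 0 < n) :
    ∃ S T : TensorK K (fun _ : Fin k => n),
      (subrankK S) ^ (k - 1) ≤ k * n - (k - 1) ∧
      (subrankK T) ^ (k - 1) ≤ k * n - (k - 1) ∧
      n ≤ subrankK (dsumK S T) :=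
  subrank_not_additive_k_general K k hk n
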